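/- Let S be a good local semigroup in ℕ^n with conductor C, G a good generating system for S, and a ∈ G with a < C in every coordinate (a not in the border of Small(S)). If there exists b ∈ ⟨G \ {a}⟩ with b ≥ a and b_i = a_i for some i, then G \ {a} is again a good generating system for S. -/

import Mathlib

/-- A good semigroup of `ℕ^n`: a submonoid satisfying (G1), (G2), (G3). -/
def IsGoodSemigroup {n : ℕ} (S : Set (Fin n → ℕ)) : Prop :=
  0 ∈ S ∧ (∀ a ∈ S, ∀ b ∈ S, a + b ∈ S) ∧
  (∀ a ∈ S, ∀ b ∈ S, a ⊓ b ∈ S) ∧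
  (∀ a ∈ S, ∀ b ∈ S, ∀ i, a i = b i →
    ∃ c ∈ S, a i < c i ∧ (∀ j, j ≠ i → min (a j) (b j) ≤ c j) ∧
      (∀ j, j ≠ i → a j ≠ b j → c j = min (a j) (b j))) ∧
  (∃ C, ∀ x, C ≤ x → x ∈ S)

/-- `C` is the conductor of `S ⊆ ℕ^n`. -/
def IsConductor {n : ℕ} (S : Set (Fin n → ℕ)) (C : Fin n → ℕ) : Prop :=
  (∀ x, C ≤ x → x ∈ S) ∧ ∀ C', (∀ x, C' ≤ x → x ∈ S) → C ≤ C'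

/-- `S` is local: its only element on the axes is `0`. -/
def IsLocal {n : ℕ} (S : Set (Fin n → ℕ)) : Prop :=
  ∀ a ∈ S, (∃ i, a i = 0) → a = 0

/-- `[G]`: the smallest submonoid of `ℕ^n` containing `G` closed under componentwise infima. -/
def goodClosure {n : ℕ} (G : Set (Fin n → ℕ)) : Set (Fin n → ℕ) :=
  ⋂₀ {M | G ⊆ M ∧ 0 ∈ M ∧ (∀ a ∈ M, ∀ b ∈ M, a + b ∈ M) ∧ ∀ a ∈ M, ∀ b ∈ M, a ⊓ b ∈ M}

/-- `[G]_C = C ⊓ [G]`. -/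
def goodClosureBd {n : ℕ} (G : Set (Fin n → ℕ)) (C : Fin n → ℕ) : Set (Fin n → ℕ) :=
  (fun x => C ⊓ x) '' goodClosure G

/-- `G` is a good generating system for `S` (with conductor `C`): `[G]_C = Small(S)`. -/
def IsGoodGenSys {n : ℕ} (S : Set (Fin n → ℕ)) (C : Fin n → ℕ) (G : Set (Fin n → ℕ)) : Prop :=
  goodClosureBd G C = {a ∈ S | a ≤ C}

/-!
Once `a` lies in `[G \ {a}]`, the two good closures coincide, so it suffices to write `a` as a
finite infimum of elements of `[G \ {a}]`: for every coordinate `j` we need some `d ≥ a` in it with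
`d j = a j`. Where `b j = a j`, take `d = b`. Otherwise axiom (G3), applied to `a` and `C ⊓ b` at
the shared coordinate `i`, gives an element of `S` above `a`, agreeing with `a` at `j` and strictly
above it at `i`; lifting its truncation to `[G]` and then to `⟨G⟩` produces `δ = m • a + g` with
`g ∈ ⟨G \ {a}⟩` and `δ j = a j`. Since `S` is local, `a j > 0`, and `m ≥ 1` would force `g j = 0`,
hence `g = 0` and `δ = a`, contradicting `δ i > a i`. So `m = 0` and `d = δ` works.
-/

section GoodClosure

variable {n : ℕ} {G H M : Set (Fin n → ℕ)} {a x : Fin n → ℕ}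

lemma subset_goodClosure (G : Set (Fin n → ℕ)) : G ⊆ goodClosure G :=
  fun _ hx => Set.mem_sInter.2 fun _ hM => hM.1 hx

lemma zero_mem_goodClosure (G : Set (Fin n → ℕ)) : 0 ∈ goodClosure G :=
  Set.mem_sInter.2 fun _ hM => hM.2.1

lemma add_mem_goodClosure {y : Fin n → ℕ} (hx : x ∈ goodClosure G) (hy : y ∈ goodClosure G) :
    x + y ∈ goodClosure G :=
  Set.mem_sInter.2 fun M hM => hM.2.2.1 x (Set.mem_sInter.1 hx M hM) y (Set.mem_sInter.1 hy M hM)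

lemma inf_mem_goodClosure {y : Fin n → ℕ} (hx : x ∈ goodClosure G) (hy : y ∈ goodClosure G) :
    x ⊓ y ∈ goodClosure G :=
  Set.mem_sInter.2 fun M hM => hM.2.2.2 x (Set.mem_sInter.1 hx M hM) y (Set.mem_sInter.1 hy M hM)

lemma goodClosure_subset (hGM : G ⊆ M) (h0 : 0 ∈ M) (hadd : ∀ x ∈ M, ∀ y ∈ M, x + y ∈ M)
    (hinf : ∀ x ∈ M, ∀ y ∈ M, x ⊓ y ∈ M) : goodClosure G ⊆ M :=
  Set.sInter_subset_of_mem ⟨hGM, h0, hadd, hinf⟩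

lemma goodClosure_mono (h : G ⊆ H) : goodClosure G ⊆ goodClosure H :=
  goodClosure_subset (h.trans (subset_goodClosure H)) (zero_mem_goodClosure H)
    (fun _ hx _ hy => add_mem_goodClosure hx hy) (fun _ hx _ hy => inf_mem_goodClosure hx hy)

lemma closure_subset_goodClosure (G : Set (Fin n → ℕ)) :
    (AddSubmonoid.closure G : Set (Fin n → ℕ)) ⊆ goodClosure G := by
  intro x hx
  induction hx using AddSubmonoid.closure_induction with
  | mem y hy => exact subset_goodClosure G hy
  | zero => exact zero_mem_goodClosure G
  | add _ _ _ _ hx hy => exact add_mem_goodClosure hx hy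

lemma exists_closure_ge_of_mem_goodClosure (hx : x ∈ goodClosure G) (j : Fin n) :
    ∃ δ ∈ AddSubmonoid.closure G, x ≤ δ ∧ δ j = x j := by
  refine goodClosure_subset (M := {x | ∀ j, ∃ δ ∈ AddSubmonoid.closure G, x ≤ δ ∧ δ j = x j})
    ?_ ?_ ?_ ?_ hx j
  · exact fun y hy j => ⟨y, AddSubmonoid.subset_closure hy, le_rfl, rfl⟩
  · exact fun j => ⟨0, zero_mem _, le_rfl, rfl⟩
  · intro y hy z hz j
    obtain ⟨δ, hδ, hyδ, hδj⟩ := hy j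
    obtain ⟨ε, hε, hzε, hεj⟩ := hz j
    exact ⟨δ + ε, add_mem hδ hε, add_le_add hyδ hzε, by simp [hδj, hεj]⟩
  · intro y hy z hz j
    rcases le_total (y j) (z j) with h | h
    · obtain ⟨δ, hδ, hyδ, hδj⟩ := hy j
      exact ⟨δ, hδ, inf_le_left.trans hyδ, by simp [hδj, h]⟩
    · obtain ⟨δ, hδ, hzδ, hδj⟩ := hz j
      exact ⟨δ, hδ, inf_le_right.trans hzδ, by simp [hδj, h]⟩

lemma mem_goodClosure_of_forall_exists_ge
    (h : ∀ j, ∃ d ∈ goodClosure G, x ≤ d ∧ d j = x j) : x ∈ goodClosure G := by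
  cases isEmpty_or_nonempty (Fin n)
  · exact Subsingleton.elim 0 x ▸ zero_mem_goodClosure G
  choose d hdG hxd hdx using h
  have hx : x = Finset.univ.inf' Finset.univ_nonempty d := by
    funext j
    rw [Finset.inf'_apply]
    exact le_antisymm (Finset.le_inf' _ _ fun k _ => hxd k j)
      (Finset.inf'_le_of_le _ (Finset.mem_univ j) (hdx j).le)
  exact hx ▸ Finset.inf'_mem _ (fun _ hy _ hz => inf_mem_goodClosure hy hz) _ _ _
    fun k _ => hdG k

lemma goodClosure_diff_singleton_eq (ha : a ∈ goodClosure (G \ {a})) :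
    goodClosure (G \ {a}) = goodClosure G := by
  refine (goodClosure_mono Set.sdiff_subset).antisymm (goodClosure_subset ?_
    (zero_mem_goodClosure _) (fun _ hx _ hy => add_mem_goodClosure hx hy)
    (fun _ hx _ hy => inf_mem_goodClosure hx hy))
  intro x hx
  obtain rfl | hxa := eq_or_ne x a
  · exact ha
  · exact subset_goodClosure _ ⟨hx, hxa⟩

end GoodClosure

section Closure

variable {n : ℕ} {G : Set (Fin n → ℕ)} {a δ : Fin n → ℕ}

lemma exists_nsmul_add_of_mem_closure (haG : a ∈ G) (hδ : δ ∈ AddSubmonoid.closure G) :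
    ∃ m : ℕ, ∃ g ∈ AddSubmonoid.closure (G \ {a}), δ = m • a + g := by
  rw [← Set.insert_eq_of_mem haG, ← Set.insert_sdiff_singleton, Set.insert_eq,
    AddSubmonoid.closure_union, AddSubmonoid.mem_sup] at hδ
  obtain ⟨y, hy, g, hg, rfl⟩ := hδ
  obtain ⟨m, rfl⟩ := AddSubmonoid.mem_closure_singleton.1 hy
  exact ⟨m, g, hg, rfl⟩

lemma mem_closure_diff_singleton_of_apply_eq {j : Fin n} (haG : a ∈ G) (haj : 0 < a j)
    (hzero : ∀ g ∈ AddSubmonoid.closure (G \ {a}), g j = 0 → g = 0)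
    (hδ : δ ∈ AddSubmonoid.closure G) (hδj : δ j = a j) (hδa : δ ≠ a) :
    δ ∈ AddSubmonoid.closure (G \ {a}) := by
  obtain ⟨m, g, hg, rfl⟩ := exists_nsmul_add_of_mem_closure haG hδ
  obtain rfl | hm := Nat.eq_zero_or_pos m
  · simpa using hg
  have hmj : m * a j + g j = a j := by simpa using hδj
  have hm1 : m = 1 := by nlinarith
  have hgj : g j = 0 := by subst hm1; omega
  exact absurd (by rw [hm1, hzero g hg hgj, one_smul, add_zero]) hδa

end Closure

section GoodSemigroup

variable {n : ℕ} {S G : Set (Fin n → ℕ)} {C a b x : Fin n → ℕ} {i : Fin n}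

lemma IsLocal.pos_of_ne_zero (hloc : IsLocal S) (ha : a ∈ S) (ha0 : a ≠ 0) (j : Fin n) :
    0 < a j :=
  Nat.pos_of_ne_zero fun h => ha0 (hloc a ha ⟨j, h⟩)

lemma IsGoodSemigroup.exists_gt_of_le_of_eq (hS : IsGoodSemigroup S) (ha : a ∈ S) (hb : b ∈ S)
    (hab : a ≤ b) (hi : a i = b i) :
    ∃ c ∈ S, a ≤ c ∧ a i < c i ∧ ∀ j, a j < b j → c j = a j := by
  obtain ⟨c, hc, hci, hle, heq⟩ := hS.2.2.2.1 a ha b hb i hi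
  have hmin : ∀ j, min (a j) (b j) = a j := fun j => min_eq_left (hab j)
  refine ⟨c, hc, fun j => ?_, hci, fun j hj => ?_⟩
  · obtain rfl | hji := eq_or_ne j i
    · exact hci.le
    · simpa [hmin] using hle j hji
  · have hji : j ≠ i := by rintro rfl; omega
    simpa [hmin] using heq j hji hj.ne

lemma IsGoodGenSys.inf_mem (hG : IsGoodGenSys S C G) (hx : x ∈ goodClosure G) : C ⊓ x ∈ S := by
  have h : C ⊓ x ∈ goodClosureBd G C := ⟨x, hx, rfl⟩
  rw [hG] at h
  exact h.1

lemma IsGoodGenSys.exists_inf_eq (hG : IsGoodGenSys S C G) (hx : x ∈ S) (hxC : x ≤ C) :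
    ∃ y ∈ goodClosure G, C ⊓ y = x := by
  have h : x ∈ {a ∈ S | a ≤ C} := ⟨hx, hxC⟩
  rwa [← hG] at h

lemma IsGoodGenSys.eq_zero_of_apply_eq_zero (hG : IsGoodGenSys S C G) (hloc : IsLocal S)
    (hC : ∀ l, 0 < C l) (hx : x ∈ goodClosure G) {j : Fin n} (hxj : x j = 0) : x = 0 := by
  have hCx : C ⊓ x = 0 := hloc _ (hG.inf_mem hx) ⟨j, by simp [hxj]⟩
  funext l
  have := congrFun hCx l
  simp only [Pi.inf_apply, Pi.zero_apply, Nat.min_eq_zero_iff] at this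
  exact this.resolve_left (hC l).ne'

lemma IsGoodGenSys.of_goodClosure_eq {H : Set (Fin n → ℕ)} (hG : IsGoodGenSys S C G)
    (h : goodClosure H = goodClosure G) : IsGoodGenSys S C H := by
  rwa [IsGoodGenSys, goodClosureBd, h]

/-- Truncating the (G3)-witness at `C` loses nothing at `i` and `j` because `a < C`. -/
lemma IsGoodGenSys.exists_mem_goodClosure_of_apply_eq {y : Fin n → ℕ} {j : Fin n}
    (hG : IsGoodGenSys S C G) (hS : IsGoodSemigroup S) (hCS : C ∈ S) (haC : ∀ l, a l < C l)
    (ha : a ∈ S) (hy : y ∈ S) (hay : a ≤ y) (hi : a i = y i) (hj : a j < y j) :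
    ∃ x ∈ goodClosure G, a ≤ x ∧ a i < x i ∧ x j = a j := by
  obtain ⟨c, hc, hac, hci, hcj⟩ := hS.exists_gt_of_le_of_eq ha hy hay hi
  obtain ⟨x, hx, hCx⟩ := hG.exists_inf_eq (hS.2.2.1 C hCS c hc) inf_le_left
  have hcx : C ⊓ c ≤ x := hCx ▸ inf_le_right
  refine ⟨x, hx, (le_inf (fun l => (haC l).le) hac).trans hcx,
    (lt_min (haC i) hci).trans_le (hcx i), ?_⟩
  have hxj : min (C j) (x j) = min (C j) (a j) := by simpa [hcj j hj] using congrFun hCx j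
  have := haC j
  omega

end GoodSemigroup

theorem remove_shared_coord_generator {n : ℕ} (S : Set (Fin n → ℕ))
    (hS : IsGoodSemigroup S) (hloc : IsLocal S)
    (C : Fin n → ℕ) (hC : IsConductor S C)
    (G : Set (Fin n → ℕ)) (hG : IsGoodGenSys S C G)
    (a : Fin n → ℕ) (haG : a ∈ G) (hab : ∀ i, a i < C i)
    (b : Fin n → ℕ) (hb : b ∈ AddSubmonoid.closure (G \ {a}))
    (hba : a ≤ b) (hshare : ∃ i, b i = a i) :
    IsGoodGenSys S C (G \ {a}) := by
  obtain ⟨i, hbi⟩ := hshare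
  have haC : a ≤ C := fun l => (hab l).le
  have haS : a ∈ S := inf_eq_right.2 haC ▸ hG.inf_mem (subset_goodClosure G haG)
  have hbS : C ⊓ b ∈ S :=
    hG.inf_mem (closure_subset_goodClosure G (AddSubmonoid.closure_mono Set.sdiff_subset hb))
  refine hG.of_goodClosure_eq (goodClosure_diff_singleton_eq ?_)
  obtain rfl | ha0 := eq_or_ne a 0
  · exact zero_mem_goodClosure _
  have hapos := hloc.pos_of_ne_zero haS ha0
  have hzero : ∀ g ∈ AddSubmonoid.closure (G \ {a}), ∀ j, g j = 0 → g = 0 := fun g hg _ =>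
    hG.eq_zero_of_apply_eq_zero hloc (fun l => (hapos l).trans (hab l))
      (closure_subset_goodClosure G (AddSubmonoid.closure_mono Set.sdiff_subset hg))
  refine mem_goodClosure_of_forall_exists_ge fun j => ?_
  obtain hj | hj := (hba j).eq_or_lt
  · exact ⟨b, closure_subset_goodClosure _ hb, hba, hj.symm⟩
  obtain ⟨x, hxG, hax, hxi, hxj⟩ := hG.exists_mem_goodClosure_of_apply_eq hS (hC.1 C le_rfl) hab
    haS hbS (le_inf haC hba) (show a i = (C ⊓ b) i by simp [hbi, (hab i).le]) (lt_min (hab j) hj)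
  obtain ⟨δ, hδ, hxδ, hδj⟩ := exists_closure_ge_of_mem_goodClosure hxG j
  refine ⟨δ, closure_subset_goodClosure _ ?_, hax.trans hxδ, hδj.trans hxj⟩
  refine mem_closure_diff_singleton_of_apply_eq haG (hapos j) (fun g hg => hzero g hg j) hδ
    (hδj.trans hxj) ?_
  rintro rfl
  exact (hxi.trans_le (hxδ i)).false
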